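/- Let x be a point inside rectangle B for a three-sided instance (ports on the left, top and right sides), and let x' be the vertical projection of x onto the top side. If there is an axis-aligned 2-bend extension of the segment xx' into a curve from the bottom side of B to x' that splits the instance into two balanced subinstances (an L-shaped and a Gamma-shaped part, each containing as many sites as ports), then this balanced split is unique: there is exactly one position of the extending curve achieving balance. -/
import Mathlib


open Set MeasureTheory

abbrev Pt : Type := ℝ × ℝ

/-- An axis-aligned rectangle. -/
structure Rect where
  x0 : ℝ
  x1 : ℝ
  y0 : ℝ
  y1 : ℝ
  hx : x0 < x1
  hy : y0 < y1

/-- The open interior of a rectangle. -/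
def Rect.inter (B : Rect) : Set Pt := Set.Ioo B.x0 B.x1 ×ˢ Set.Ioo B.y0 B.y1

/-- The closed rectangle as a point set. -/
def Rect.closed (B : Rect) : Set Pt := Set.Icc B.x0 B.x1 ×ˢ Set.Icc B.y0 B.y1

/-- The (closed) top side of a rectangle. -/
def Rect.topSide (R : Rect) : Set Pt := {p | p.2 = R.y1 ∧ p.1 ∈ Set.Icc R.x0 R.x1}

/-- The (closed) left side of a rectangle. -/
def Rect.leftSide (R : Rect) : Set Pt := {p | p.1 = R.x0 ∧ p.2 ∈ Set.Icc R.y0 R.y1}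

/-- Horizontal segment at height `y` between abscissae `xa` and `xb`. -/
def hSeg (xa xb y : ℝ) : Set Pt := {p | p.2 = y ∧ p.1 ∈ Set.uIcc xa xb}

/-- Vertical segment at abscissa `x` between ordinates `ya` and `yb`. -/
def vSeg (x ya yb : ℝ) : Set Pt := {p | p.1 = x ∧ p.2 ∈ Set.uIcc ya yb}

/-- 1-bend po-leader to a port on the top or bottom side: a horizontal segment
from the site followed by a vertical segment ending at the port
(either segment may be degenerate). -/
def hvLeader (s p : Pt) : Set Pt := hSeg s.1 p.1 s.2 ∪ vSeg p.1 s.2 p.2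

/-- 1-bend po-leader to a port on the left or right side: a vertical segment
from the site followed by a horizontal segment ending at the port. -/
def vhLeader (s p : Pt) : Set Pt := vSeg s.1 s.2 p.2 ∪ hSeg s.1 p.1 p.2

/-- A side of `B` carrying ports in a three-sided instance. -/
inductive TSide : Type | left | top | right
deriving DecidableEq

/-- A three-sided boundary labelling instance: `n` sites in general position
inside `B` and `n` ports on the left, top and right sides of `B`. -/
structure ThreeSided (n : ℕ) where
  B : Rect
  site : Fin n → Pt
  port : Fin n → Pt
  side : Fin n → TSide
  site_mem : ∀ i, site i ∈ B.inter
  port_top : ∀ i, side i = TSide.top →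
    (port i).2 = B.y1 ∧ (port i).1 ∈ Set.Ioo B.x0 B.x1
  port_left : ∀ i, side i = TSide.left →
    (port i).1 = B.x0 ∧ (port i).2 ∈ Set.Ioo B.y0 B.y1
  port_right : ∀ i, side i = TSide.right →
    (port i).1 = B.x1 ∧ (port i).2 ∈ Set.Ioo B.y0 B.y1
  gp_site_x : Function.Injective fun i => (site i).1
  gp_site_y : Function.Injective fun i => (site i).2

/-- Site `i` lies to the left of the 2-bend curve through `x` whose vertical
extension below `x` drops to the bottom side at abscissa `u`: the curve
consists of the vertical segment from `x'` (the projection of `x` onto the top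
side) down to `x`, a horizontal segment from `x` to abscissa `u` at height
`x.2`, and a vertical segment down to the bottom side. -/
def ThreeSided.LeftOfCurve {n : ℕ} (P : ThreeSided n) (x : Pt) (u : ℝ) (i : Fin n) : Prop :=
  (x.2 < (P.site i).2 ∧ (P.site i).1 < x.1) ∨
  ((P.site i).2 < x.2 ∧ (P.site i).1 < u)

/-- The split induced by the 2-bend extension at abscissa `u` is balanced: the
number of sites to the left of the curve equals the number of ports on the
boundary of the left region (all left ports and the top ports left of `x`). -/
def ThreeSided.BalancedSplit {n : ℕ} (P : ThreeSided n) (x : Pt) (u : ℝ) : Prop :=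
  Nat.card {i : Fin n // P.LeftOfCurve x u i} =
    Nat.card {j : Fin n // P.side j = TSide.left ∨
      (P.side j = TSide.top ∧ (P.port j).1 < x.1)}

/-- given a point `x` inside `B` (for a three-sided instance), if
two 2-bend extensions of the vertical segment `x x'` (dropping to the bottom
side at abscissae `u` and `u'`, both missing all sites) yield balanced splits,
then the two splits coincide: the balanced split is unique. -/
theorem three_sided_balanced_split_unique {n : ℕ} (P : ThreeSided n)
    (x : Pt) (hx : x ∈ P.B.inter)
    (hgen : ∀ i, (P.site i).1 ≠ x.1 ∧ (P.site i).2 ≠ x.2)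
    (u u' : ℝ) (hu : u ∈ Set.Ioo P.B.x0 P.B.x1) (hu' : u' ∈ Set.Ioo P.B.x0 P.B.x1)
    (hgu : ∀ i, (P.site i).1 ≠ u) (hgu' : ∀ i, (P.site i).1 ≠ u')
    (hb : P.BalancedSplit x u) (hb' : P.BalancedSplit x u') :
    {i : Fin n | P.LeftOfCurve x u i} = {i : Fin n | P.LeftOfCurve x u' i} := by
  have hsub : ∀ a b : ℝ, a ≤ b →
      {i : Fin n | P.LeftOfCurve x a i} ⊆ {i : Fin n | P.LeftOfCurve x b i} := by
    intro a b hab i hi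
    rcases hi with ⟨h1, h2⟩ | ⟨h1, h2⟩
    · exact Or.inl ⟨h1, h2⟩
    · exact Or.inr ⟨h1, lt_of_lt_of_le h2 hab⟩
  have hcard : ({i : Fin n | P.LeftOfCurve x u i}).ncard =
      ({i : Fin n | P.LeftOfCurve x u' i}).ncard := by
    rw [← Nat.card_coe_set_eq, ← Nat.card_coe_set_eq]
    exact hb.trans hb'.symm
  rcases le_total u u' with h | h
  · exact Set.eq_of_subset_of_ncard_le (hsub u u' h) hcard.ge (Set.toFinite _)
  · exact (Set.eq_of_subset_of_ncard_le (hsub u' u h) hcard.le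
      (Set.toFinite _)).symm
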